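/- Let Jac be the solution space of a Jacobi equation J'' + R(t)J = 0 on a finite-dimensional real inner product space E with each R(t) symmetric. Call c < d conjugate if there exists a nonzero solution J with J(c) = J(d) = 0. If c < d are conjugate, then for every c̄ ≤ c there exists d̄ ∈ [c, d] with c̄ < d̄ such that c̄ and d̄ are conjugate. -/

import Mathlib

/-!
Let `B` be the operator solution of the Jacobi equation with `B c' = 0`, `B' c' = 1`. Its columns
`B · v` are Jacobi fields vanishing at `c'`, so if no point of `[c, d]` is conjugate to `c'`, then
`B t` is invertible for `t ∈ [c, d]`. There `U = B' B⁻¹` is symmetric (the Wronskian of `B` vanishes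
at `c'`, hence everywhere) and solves the Riccati equation `U' = -R - U²`. For a Jacobi field `J`
with `J c = J d = 0` this makes `g = ⟪J, J'⟫ - ⟪U J, J⟫` nondecreasing, with `g' = ‖J' - U J‖²`
(Picone's identity). As `g c = g d = 0`, `g` is constant on `[c, d]`, so `‖J' c‖² = g' c = 0`, and
`J c = J' c = 0` forces `J = 0`.

The existence of `B` and the uniqueness of Jacobi fields come from the linear theory of ODEs: local
Picard–Lindelöf steps of uniform length on compact intervals, glued together.
-/

open Module RealInnerProductSpace

noncomputable section

/-- `J` is a (normal) Jacobi field for the family of operators `R`, i.e. a `C²`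
solution of the Jacobi equation `J'' + R(t) J = 0`. -/
def IsJacobiField {E : Type*} [NormedAddCommGroup E] [NormedSpace ℝ E]
    (R : ℝ → E →ₗ[ℝ] E) (J : ℝ → E) : Prop :=
  ContDiff ℝ 2 J ∧ ∀ t : ℝ, deriv (deriv J) t = - R t (J t)

/-- `c` and `d` are conjugate for the Jacobi equation given by `R` if some nonzero
solution vanishes at both `c` and `d`. -/
def AreConjugate {E : Type*} [NormedAddCommGroup E] [NormedSpace ℝ E]
    (R : ℝ → E →ₗ[ℝ] E) (c d : ℝ) : Prop :=
  ∃ J : ℝ → E, IsJacobiField R J ∧ J ≠ 0 ∧ J c = 0 ∧ J d = 0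

open Set
open scoped NNReal

section LinearODE

variable {F : Type*} [NormedAddCommGroup F] [NormedSpace ℝ F]

def IVPSolvableOn (v : ℝ → F → F) (a b : ℝ) : Prop :=
  ∀ t₀ ∈ Icc a b, ∀ x₀ : F, ∃ f : ℝ → F, f t₀ = x₀ ∧
    ∀ t ∈ Icc a b, HasDerivWithinAt f (v t (f t)) (Icc a b) t

theorem exists_hasDerivWithinAt_Icc_glue (v : ℝ → F → F) {a m b : ℝ} (ham : a ≤ m)
    (hmb : m ≤ b) {f₁ f₂ : ℝ → F} (hm : f₁ m = f₂ m)
    (h₁ : ∀ t ∈ Icc a m, HasDerivWithinAt f₁ (v t (f₁ t)) (Icc a m) t)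
    (h₂ : ∀ t ∈ Icc m b, HasDerivWithinAt f₂ (v t (f₂ t)) (Icc m b) t) :
    ∃ f : ℝ → F, EqOn f f₁ (Icc a m) ∧ EqOn f f₂ (Icc m b) ∧
      ∀ t ∈ Icc a b, HasDerivWithinAt f (v t (f t)) (Icc a b) t := by
  classical
  set f : ℝ → F := fun t => if t ≤ m then f₁ t else f₂ t
  have e₁ : EqOn f f₁ (Icc a m) := fun t ht => if_pos ht.2
  have e₂ : EqOn f f₂ (Icc m b) := fun t ht => by
    rcases ht.1.eq_or_lt with rfl | hlt
    · exact (if_pos le_rfl).trans hm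
    · exact if_neg hlt.not_ge
  have piece : ∀ {s : Set ℝ} {g : ℝ → F}, IsClosed s → EqOn f g s →
      (∀ t ∈ s, HasDerivWithinAt g (v t (g t)) s t) →
      ∀ t, HasDerivWithinAt f (v t (f t)) s t := by
    intro s g hs hfg hg t
    by_cases ht : t ∈ s
    · rw [hfg ht]
      exact (hg t ht).congr hfg (hfg ht)
    · exact HasFDerivWithinAt.of_notMem_closure (by rwa [hs.closure_eq])
  refine ⟨f, e₁, e₂, fun t _ => ?_⟩
  rw [← Icc_union_Icc_eq_Icc ham hmb]
  exact (piece isClosed_Icc e₁ h₁ t).union (piece isClosed_Icc e₂ h₂ t)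

theorem IVPSolvableOn.trans {v : ℝ → F → F} {a m b : ℝ} (ham : a ≤ m) (hmb : m ≤ b)
    (h₁ : IVPSolvableOn v a m) (h₂ : IVPSolvableOn v m b) : IVPSolvableOn v a b := by
  intro t₀ ht₀ x₀
  rcases le_total t₀ m with htm | hmt
  · obtain ⟨f₁, hf₁, hf₁'⟩ := h₁ t₀ ⟨ht₀.1, htm⟩ x₀
    obtain ⟨f₂, hf₂, hf₂'⟩ := h₂ m ⟨le_rfl, hmb⟩ (f₁ m)
    obtain ⟨f, hf, -, hf'⟩ := exists_hasDerivWithinAt_Icc_glue v ham hmb hf₂.symm hf₁' hf₂'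
    exact ⟨f, (hf ⟨ht₀.1, htm⟩).trans hf₁, hf'⟩
  · obtain ⟨f₂, hf₂, hf₂'⟩ := h₂ t₀ ⟨hmt, ht₀.2⟩ x₀
    obtain ⟨f₁, hf₁, hf₁'⟩ := h₁ m ⟨ham, le_rfl⟩ (f₂ m)
    obtain ⟨f, -, hf, hf'⟩ := exists_hasDerivWithinAt_Icc_glue v ham hmb hf₁ hf₁' hf₂'
    exact ⟨f, (hf ⟨hmt, ht₀.2⟩).trans hf₂, hf'⟩

variable {L : ℝ → F →L[ℝ] F}

theorem eqOn_Ioo_of_hasDerivAt_clm (hL : Continuous L) {a b t₀ : ℝ} (ht₀ : t₀ ∈ Ioo a b)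
    {f g : ℝ → F} (hf : ∀ t ∈ Ioo a b, HasDerivAt f (L t (f t)) t)
    (hg : ∀ t ∈ Ioo a b, HasDerivAt g (L t (g t)) t) (h₀ : f t₀ = g t₀) :
    EqOn f g (Ioo a b) := by
  obtain ⟨M, hM⟩ := isCompact_Icc.exists_bound_of_continuousOn (hL.continuousOn (s := Icc a b))
  have hlip : ∀ t ∈ Ioo a b, LipschitzOnWith M.toNNReal (fun x => L t x) univ := fun t ht =>
    ((L t).lipschitz.weaken ((hM t (Ioo_subset_Icc_self ht)).trans M.le_coe_toNNReal))
      |>.lipschitzOnWith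
  exact ODE_solution_unique_of_mem_Ioo hlip ht₀ (fun t ht => ⟨hf t ht, mem_univ _⟩)
    (fun t ht => ⟨hg t ht, mem_univ _⟩) h₀

theorem eq_of_hasDerivAt_clm (hL : Continuous L) {f g : ℝ → F}
    (hf : ∀ t, HasDerivAt f (L t (f t)) t) (hg : ∀ t, HasDerivAt g (L t (g t)) t) {t₀ : ℝ}
    (h₀ : f t₀ = g t₀) : f = g := by
  ext t
  exact eqOn_Ioo_of_hasDerivAt_clm hL (a := min t t₀ - 1) (b := max t t₀ + 1)
    ⟨by linarith [min_le_right t t₀], by linarith [le_max_right t t₀]⟩ (fun s _ => hf s)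
    (fun s _ => hg s) h₀ ⟨by linarith [min_le_left t t₀], by linarith [le_max_left t t₀]⟩

def companionCLM (A : ℝ → F →L[ℝ] F) (t : ℝ) : F × F →L[ℝ] F × F :=
  .inl ℝ F F ∘L .snd ℝ F F + .inr ℝ F F ∘L A t ∘L .fst ℝ F F

@[simp]
theorem companionCLM_apply (A : ℝ → F →L[ℝ] F) (t : ℝ) (p : F × F) :
    companionCLM A t p = (p.2, A t p.1) := by
  simp [companionCLM]

theorem continuous_companionCLM {A : ℝ → F →L[ℝ] F} (hA : Continuous A) :
    Continuous (companionCLM A) :=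
  continuous_const.add (continuous_const.clm_comp (hA.clm_comp continuous_const))

theorem eq_zero_of_second_order_clm {A : ℝ → F →L[ℝ] F} (hA : Continuous A) {x v : ℝ → F}
    (hx : ∀ t, HasDerivAt x (v t) t) (hv : ∀ t, HasDerivAt v (A t (x t)) t) {t₀ : ℝ}
    (hx₀ : x t₀ = 0) (hv₀ : v t₀ = 0) : x = 0 := by
  have h := eq_of_hasDerivAt_clm (continuous_companionCLM hA) (f := fun t => (x t, v t))
    (g := fun _ => 0) (fun t => (hx t).prodMk (hv t) |>.congr_deriv (by simp))
    (fun t => (hasDerivAt_const t 0).congr_deriv (by ext <;> simp)) (t₀ := t₀) (by simp [hx₀, hv₀])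
  funext t
  exact congr_arg Prod.fst (congr_fun h t)

variable [CompleteSpace F]

/-- On a short interval the Picard–Lindelöf theorem applies to `x' = L t x` in the ball of radius
`M ‖x₀‖` about the initial value, where the field is bounded by `M (1 + M) ‖x₀‖`. -/
theorem ivpSolvableOn_of_mul_sub_le_one (hL : Continuous L) {a b : ℝ} {M : ℝ≥0}
    (hM : ∀ t ∈ Icc a b, ‖L t‖ ≤ M) (hab : (M + 1) * (b - a) ≤ 1) :
    IVPSolvableOn (fun t x => L t x) a b := by
  intro t₀ ht₀ x₀
  have hPL : IsPicardLindelof (fun t x => L t x) ⟨t₀, ht₀⟩ x₀ (M * ‖x₀‖₊) 0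
      (M * (‖x₀‖₊ + M * ‖x₀‖₊)) M := by
    refine ⟨fun t ht => ?_, fun x _ => (hL.clm_apply continuous_const).continuousOn,
      fun t ht x hx => ?_, ?_⟩
    · exact ((L t).lipschitz.weaken (hM t ht)).lipschitzOnWith
    · have hx' : ‖x‖ ≤ ‖x₀‖ + M * ‖x₀‖ := by
        have := norm_le_norm_add_norm_sub' x x₀
        rw [mem_closedBall_iff_norm] at hx
        push_cast at hx
        linarith
      push_cast
      exact (L t).le_of_opNorm_le (hM t ht) x |>.trans (by gcongr)
    · push_cast
      have hmax : max (b - t₀) (t₀ - a) ≤ b - a :=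
        max_le (by linarith [ht₀.1]) (by linarith [ht₀.2])
      have h0 : (0 : ℝ) ≤ M * ‖x₀‖ := by positivity
      calc (M : ℝ) * (‖x₀‖ + M * ‖x₀‖) * max (b - t₀) (t₀ - a)
          ≤ M * ‖x₀‖ * ((M + 1) * (b - a)) := by
            rw [show (M : ℝ) * (‖x₀‖ + M * ‖x₀‖) = M * ‖x₀‖ * (M + 1) by ring, mul_assoc]
            gcongr
        _ ≤ M * ‖x₀‖ - 0 := by nlinarith
  exact hPL.exists_eq_forall_mem_Icc_hasDerivWithinAt₀

theorem ivpSolvableOn_clm (hL : Continuous L) (a b : ℝ) :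
    IVPSolvableOn (fun t x => L t x) a b := by
  obtain ⟨M, hM⟩ : ∃ M : ℝ≥0, ∀ t ∈ Icc a b, ‖L t‖ ≤ M := by
    obtain ⟨M, hM⟩ := isCompact_Icc.exists_bound_of_continuousOn hL.continuousOn
    exact ⟨M.toNNReal, fun t ht => (hM t ht).trans (le_max_left _ _)⟩
  suffices ∀ n : ℕ, ∀ a' b', a ≤ a' → b' ≤ b → (M + 1) * (b' - a') ≤ n →
      IVPSolvableOn (fun t x => L t x) a' b' from
    this _ a b le_rfl le_rfl (Nat.le_ceil _)
  intro n
  induction n with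
  | zero =>
    intro a' b' ha hb hn
    exact ivpSolvableOn_of_mul_sub_le_one hL (fun t ht => hM t ⟨ha.trans ht.1, ht.2.trans hb⟩)
      (by push_cast at hn; linarith)
  | succ n ih =>
    intro a' b' ha hb hn
    by_cases hshort : (M + 1) * (b' - a') ≤ 1
    · exact ivpSolvableOn_of_mul_sub_le_one hL
        (fun t ht => hM t ⟨ha.trans ht.1, ht.2.trans hb⟩) hshort
    set m := b' - 1 / (M + 1)
    have hlast : (M + 1) * (b' - m) = 1 := by simp only [m]; field_simp; ring
    refine IVPSolvableOn.trans (m := m) ?_ (sub_le_self _ (by positivity)) ?_ ?_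
    · nlinarith
    · refine ih a' m ha ((sub_le_self _ (by positivity)).trans hb) ?_
      push_cast at hn
      nlinarith
    · exact ivpSolvableOn_of_mul_sub_le_one hL
        (fun t ht => hM t ⟨ha.trans (by nlinarith [ht.1]), ht.2.trans hb⟩) hlast.le

theorem exists_forall_hasDerivAt_clm (hL : Continuous L) (t₀ : ℝ) (x₀ : F) :
    ∃ f : ℝ → F, f t₀ = x₀ ∧ ∀ t, HasDerivAt f (L t (f t)) t := by
  let I (n : ℕ) : Set ℝ := Ioo (t₀ - (n + 1)) (t₀ + (n + 1))
  have hI₀ (n : ℕ) : t₀ ∈ I n := ⟨by linarith, by linarith⟩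
  have hI_mono {m n : ℕ} (h : m ≤ n) : I m ⊆ I n := by
    have : (m : ℝ) ≤ n := by exact_mod_cast h
    exact Ioo_subset_Ioo (by linarith) (by linarith)
  have hsol (n : ℕ) : ∃ g : ℝ → F, g t₀ = x₀ ∧ ∀ t ∈ I n, HasDerivAt g (L t (g t)) t := by
    obtain ⟨g, hg₀, hg⟩ := ivpSolvableOn_clm hL (t₀ - (n + 1)) (t₀ + (n + 1)) t₀
      (Ioo_subset_Icc_self (hI₀ n)) x₀
    exact ⟨g, hg₀, fun t ht => (hg t (Ioo_subset_Icc_self ht)).hasDerivAt (Icc_mem_nhds ht.1 ht.2)⟩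
  choose g hg₀ hg using hsol
  have hagree {m n : ℕ} (h : m ≤ n) : EqOn (g m) (g n) (I m) :=
    eqOn_Ioo_of_hasDerivAt_clm hL (hI₀ m) (hg m) (fun t ht => hg n t (hI_mono h ht))
      ((hg₀ m).trans (hg₀ n).symm)
  have hagree' (m n : ℕ) : EqOn (g m) (g n) (I (min m n)) := by
    rcases le_total m n with h | h
    · rw [min_eq_left h]; exact hagree h
    · rw [min_eq_right h]; exact (hagree h).symm
  let N (t : ℝ) : ℕ := ⌈|t - t₀|⌉₊
  have hN (t : ℝ) : t ∈ I (N t) := by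
    have h := (abs_le.mp (Nat.le_ceil |t - t₀|))
    exact ⟨by linarith [h.1], by linarith [h.2]⟩
  refine ⟨fun t => g (N t) t, hagree' _ 0 (hI₀ _) |>.trans (hg₀ 0), fun t => ?_⟩
  have hloc : (fun s => g (N s) s) =ᶠ[nhds t] g (N t) := by
    filter_upwards [isOpen_Ioo.mem_nhds (hN t)] with s hs
    refine hagree' _ _ ?_
    rcases min_choice (N s) (N t) with h | h <;> rw [h]
    exacts [hN s, hs]
  exact (hg _ t (hN t)).congr_of_eventuallyEq hloc |>.congr_deriv (by rw [hloc.eq_of_nhds])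

theorem exists_hasDerivAt_of_second_order_clm {A : ℝ → F →L[ℝ] F} (hA : Continuous A)
    (t₀ : ℝ) (x₀ v₀ : F) :
    ∃ x v : ℝ → F, x t₀ = x₀ ∧ v t₀ = v₀ ∧
      ∀ t, HasDerivAt x (v t) t ∧ HasDerivAt v (A t (x t)) t := by
  obtain ⟨p, hp₀, hp⟩ := exists_forall_hasDerivAt_clm (continuous_companionCLM hA) t₀ (x₀, v₀)
  refine ⟨fun t => (p t).1, fun t => (p t).2, by simp [hp₀], by simp [hp₀], fun t => ⟨?_, ?_⟩⟩
  · exact (hasFDerivAt_fst.comp_hasDerivAt t (hp t)).congr_deriv (by simp)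
  · exact (hasFDerivAt_snd.comp_hasDerivAt t (hp t)).congr_deriv (by simp)

end LinearODE

theorem HasDerivAt.mul_ringInverse_riccati {𝔸 : Type*} [NormedRing 𝔸] [NormedAlgebra ℝ 𝔸]
    [HasSummableGeomSeries 𝔸] {B C : ℝ → 𝔸} {P : 𝔸} {t : ℝ} (hB : HasDerivAt B (C t) t)
    (hC : HasDerivAt C (-P * B t) t) (hu : IsUnit (B t)) :
    HasDerivAt (fun s => C s * Ring.inverse (B s)) (-P - (C t * Ring.inverse (B t)) ^ 2) t := by
  obtain ⟨u, hu⟩ := hu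
  have hinv : HasDerivAt (fun s => Ring.inverse (B s)) (-(↑u⁻¹ * C t * ↑u⁻¹)) t := by
    have h := hasFDerivAt_ringInverse (𝕜 := ℝ) u
    rw [hu] at h
    exact (h.comp_hasDerivAt t hB).congr_deriv (by simp [ContinuousLinearMap.mulLeftRight_apply])
  refine (hC.mul hinv).congr_deriv ?_
  rw [← hu, Ring.inverse_unit]
  have : (↑u : 𝔸) * ↑u⁻¹ = 1 := u.mul_inv
  calc -P * ↑u * ↑u⁻¹ + C t * -(↑u⁻¹ * C t * ↑u⁻¹)
      = -(P * (↑u * ↑u⁻¹)) - C t * ↑u⁻¹ * (C t * ↑u⁻¹) := by noncomm_ring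
    _ = _ := by rw [this, mul_one, sq]

section Picone

variable {E : Type*} [NormedAddCommGroup E] [InnerProductSpace ℝ E]

theorem isSymmetric_mul_ringInverse {B C : E →L[ℝ] E}
    (hBC : ∀ x y, ⟪C x, B y⟫ = ⟪B x, C y⟫) (hB : IsUnit B) :
    ((C * Ring.inverse B : E →L[ℝ] E) : E →ₗ[ℝ] E).IsSymmetric := by
  obtain ⟨u, rfl⟩ := hB
  intro x y
  have hu : ∀ z, (u : E →L[ℝ] E) ((↑u⁻¹ : E →L[ℝ] E) z) = z := fun z => by
    rw [← mul_apply_eq_comp, u.mul_inv, one_apply_eq_self]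
  simpa [Ring.inverse_unit, hu] using
    hBC ((↑u⁻¹ : E →L[ℝ] E) x) ((↑u⁻¹ : E →L[ℝ] E) y)

theorem hasDerivAt_picone {J J' : ℝ → E} {U : ℝ → E →L[ℝ] E} {P : E →L[ℝ] E} {t : ℝ}
    (hJ : HasDerivAt J (J' t) t) (hJ' : HasDerivAt J' (-P (J t)) t)
    (hU : HasDerivAt U (-P - U t ^ 2) t) (hUsym : (U t : E →ₗ[ℝ] E).IsSymmetric) :
    HasDerivAt (fun s => ⟪J s, J' s⟫ - ⟪U s (J s), J s⟫) (‖J' t - U t (J t)‖ ^ 2) t := by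
  refine ((hJ.inner ℝ hJ').sub ((hU.clm_apply hJ).inner ℝ hJ)).congr_deriv ?_
  have h₁ := hUsym (U t (J t)) (J t)
  have h₂ := hUsym (J' t) (J t)
  simp only [ContinuousLinearMap.coe_coe] at h₁ h₂
  rw [← real_inner_self_eq_norm_sq]
  simp only [sq, sub_apply, neg_apply, mul_apply_eq_comp, inner_sub_left, inner_sub_right,
    inner_add_left, inner_neg_left, inner_neg_right]
  linarith [real_inner_comm (J t) (P (J t)), real_inner_comm (U t (J t)) (J' t)]

end Picone

theorem eq_zero_of_hasDerivAt_nonneg_of_eq {g g' : ℝ → ℝ} {c d : ℝ} (hcd : c < d)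
    (hg : ∀ t ∈ Icc c d, HasDerivAt g (g' t) t) (hg' : ∀ t ∈ Icc c d, 0 ≤ g' t)
    (hgcd : g c = g d) : g' c = 0 := by
  have hc : c ∈ Icc c d := left_mem_Icc.mpr hcd.le
  have hmono : MonotoneOn g (Icc c d) := by
    refine monotoneOn_of_hasDerivWithinAt_nonneg (f' := g') (convex_Icc c d)
      (fun t ht => (hg t ht).continuousAt.continuousWithinAt) (fun t ht => ?_) (fun t ht => ?_)
    all_goals rw [interior_Icc] at ht
    exacts [(hg t (Ioo_subset_Icc_self ht)).hasDerivWithinAt, hg' t (Ioo_subset_Icc_self ht)]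
  have hconst : EqOn g (fun _ => g c) (Icc c d) := fun t ht =>
    le_antisymm (hgcd ▸ hmono ht (right_mem_Icc.mpr hcd.le) ht.2) (hmono hc ht ht.1)
  exact (uniqueDiffOn_Icc hcd c hc).eq_deriv _ (hg c hc).hasDerivWithinAt
    ((hasDerivWithinAt_const (s := Icc c d) (x := c) (g c)).congr hconst (hconst hc))

section JacobiField

variable {E : Type*} [NormedAddCommGroup E] [NormedSpace ℝ E] {R : ℝ → E →ₗ[ℝ] E} {J : ℝ → E}

theorem IsJacobiField.hasDerivAt (hJ : IsJacobiField R J) (t : ℝ) :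
    HasDerivAt J (deriv J t) t :=
  (hJ.1.differentiable (by norm_num) t).hasDerivAt

theorem IsJacobiField.hasDerivAt_deriv (hJ : IsJacobiField R J) (t : ℝ) :
    HasDerivAt (deriv J) (-R t (J t)) t :=
  hJ.2 t ▸ (((contDiff_succ_iff_deriv (n := 1)).mp hJ.1).2.2.differentiable one_ne_zero t
    |>.hasDerivAt)

variable [FiniteDimensional ℝ E]

theorem isJacobiField_of_hasDerivAt (hR : Continuous fun t => (R t).toContinuousLinearMap)
    {V : ℝ → E} (hJ : ∀ t, HasDerivAt J (V t) t) (hV : ∀ t, HasDerivAt V (-R t (J t)) t) :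
    IsJacobiField R J := by
  have hJV : deriv J = V := funext fun t => (hJ t).deriv
  have hV' : deriv V = fun t => -R t (J t) := funext fun t => (hV t).deriv
  refine ⟨(contDiff_succ_iff_deriv (n := 1)).mpr ⟨fun t => (hJ t).differentiableAt, by simp, ?_⟩,
    fun t => by rw [hJV, hV']⟩
  rw [hJV, contDiff_one_iff_deriv, hV']
  exact ⟨fun t => (hV t).differentiableAt,
    (hR.clm_apply (continuous_iff_continuousAt.mpr fun t => (hJ t).continuousAt)).neg⟩

theorem IsJacobiField.eq_zero_of_deriv_eq_zero
    (hR : Continuous fun t => (R t).toContinuousLinearMap) (hJ : IsJacobiField R J) {t₀ : ℝ}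
    (h₀ : J t₀ = 0) (h₁ : deriv J t₀ = 0) : J = 0 :=
  eq_zero_of_second_order_clm (A := fun t => -(R t).toContinuousLinearMap) hR.neg hJ.hasDerivAt
    (fun t => by simpa using hJ.hasDerivAt_deriv t) h₀ h₁

end JacobiField

section JacobiTensor

variable {E : Type*} [NormedAddCommGroup E] [InnerProductSpace ℝ E] [FiniteDimensional ℝ E]
  {R : ℝ → E →ₗ[ℝ] E} {B C : ℝ → E →L[ℝ] E}

def IsJacobiTensor (R : ℝ → E →ₗ[ℝ] E) (B C : ℝ → E →L[ℝ] E) : Prop :=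
  ∀ t, HasDerivAt B (C t) t ∧ HasDerivAt C (-(R t).toContinuousLinearMap * B t) t

theorem exists_isJacobiTensor (hR : Continuous fun t => (R t).toContinuousLinearMap) (t₀ : ℝ) :
    ∃ B C : ℝ → E →L[ℝ] E, IsJacobiTensor R B C ∧ B t₀ = 0 ∧ C t₀ = 1 := by
  obtain ⟨B, C, hB₀, hC₀, h⟩ := exists_hasDerivAt_of_second_order_clm
    (A := fun t => ContinuousLinearMap.mul ℝ (E →L[ℝ] E) (-(R t).toContinuousLinearMap))
    ((ContinuousLinearMap.mul ℝ _).continuous.comp hR.neg) t₀ 0 1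
  exact ⟨B, C, h, hB₀, hC₀⟩

theorem IsJacobiTensor.isJacobiField_apply (hR : Continuous fun t => (R t).toContinuousLinearMap)
    (h : IsJacobiTensor R B C) (v : E) : IsJacobiField R (fun t => B t v) :=
  isJacobiField_of_hasDerivAt hR (V := fun t => C t v)
    (fun t => by simpa using (h t).1.clm_apply (hasDerivAt_const t v))
    (fun t => by simpa using (h t).2.clm_apply (hasDerivAt_const t v))

theorem IsJacobiTensor.isUnit_of_not_areConjugate
    (hR : Continuous fun t => (R t).toContinuousLinearMap) (h : IsJacobiTensor R B C) {t₀ t : ℝ}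
    (hB₀ : B t₀ = 0) (hC₀ : C t₀ = 1) (ht : ¬AreConjugate R t₀ t) : IsUnit (B t) := by
  have hinj : Function.Injective (B t) := by
    refine (injective_iff_map_eq_zero _).mpr fun v hv => by_contra fun hv₀ => ht ?_
    refine ⟨fun s => B s v, h.isJacobiField_apply hR v, fun hzero => hv₀ ?_, by simp [hB₀], hv⟩
    have hd : HasDerivAt (fun s => B s v) v t₀ := by
      simpa [hC₀] using (h t₀).1.clm_apply (hasDerivAt_const t₀ v)
    rw [hzero] at hd
    exact hd.unique (hasDerivAt_const t₀ 0)
  exact ContinuousLinearMap.isUnit_iff_bijective.mpr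
    ⟨hinj, LinearMap.injective_iff_surjective.mp hinj⟩

theorem IsJacobiTensor.inner_comm (hRsym : ∀ t, (R t).IsSymmetric) (h : IsJacobiTensor R B C)
    {t₀ : ℝ} (hB₀ : B t₀ = 0) (t : ℝ) (x y : E) : ⟪C t x, B t y⟫ = ⟪B t x, C t y⟫ := by
  -- `w` is a matrix entry of the Wronskian `C* B - B* C`, constant since `R` is symmetric
  set w : ℝ → ℝ := fun s => ⟪C s x, B s y⟫ - ⟪B s x, C s y⟫
  have hw : ∀ s, HasDerivAt w 0 s := by
    intro s
    have hB z := (h s).1.clm_apply (hasDerivAt_const s z)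
    have hC z := (h s).2.clm_apply (hasDerivAt_const s z)
    refine (((hC x).inner ℝ (hB y)).sub ((hB x).inner ℝ (hC y))).congr_deriv ?_
    simp only [map_zero, add_zero, neg_mul, neg_apply, mul_apply_eq_comp, inner_neg_left,
      inner_neg_right]
    have := hRsym s (B s x) (B s y)
    simp only [LinearMap.coe_toContinuousLinearMap'] at this ⊢
    linarith
  have hconst := is_const_of_deriv_eq_zero (fun s => (hw s).differentiableAt)
    (fun s => (hw s).deriv) t t₀
  have : w t₀ = 0 := by simp [w, hB₀]
  simp only [w] at hconst this
  linarith

theorem IsJacobiTensor.eq_zero_of_isUnit (hR : Continuous fun t => (R t).toContinuousLinearMap)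
    (hRsym : ∀ t, (R t).IsSymmetric) (h : IsJacobiTensor R B C) {t₀ c d : ℝ} (hB₀ : B t₀ = 0)
    (hcd : c < d) (hu : ∀ t ∈ Icc c d, IsUnit (B t)) {J : ℝ → E} (hJ : IsJacobiField R J)
    (hJc : J c = 0) (hJd : J d = 0) : J = 0 := by
  set U : ℝ → E →L[ℝ] E := fun s => C s * Ring.inverse (B s)
  have hg : ∀ t ∈ Icc c d, HasDerivAt (fun s => ⟪J s, deriv J s⟫ - ⟪U s (J s), J s⟫)
      (‖deriv J t - U t (J t)‖ ^ 2) t := fun t ht =>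
    hasDerivAt_picone (hJ.hasDerivAt t) (hJ.hasDerivAt_deriv t)
      ((h t).1.mul_ringInverse_riccati (h t).2 (hu t ht))
      (isSymmetric_mul_ringInverse (h.inner_comm hRsym hB₀ t) (hu t ht))
  have hc := eq_zero_of_hasDerivAt_nonneg_of_eq hcd hg (fun _ _ => by positivity)
    (by simp [hJc, hJd])
  refine hJ.eq_zero_of_deriv_eq_zero hR hJc ?_
  simpa [hJc] using hc

end JacobiTensor

/-- Monotonicity of conjugate points: if `c < d` are conjugate, then for every `c̄ ≤ c`
there exists `d̄ ∈ [c,d]`, `c̄ < d̄`, such that `c̄` and `d̄` are conjugate. -/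
theorem conjugate_points_monotone {E : Type*} [NormedAddCommGroup E]
    [InnerProductSpace ℝ E] [FiniteDimensional ℝ E] (R : ℝ → E →ₗ[ℝ] E)
    (hRcont : Continuous fun p : ℝ × E => R p.1 p.2)
    (hRsym : ∀ t : ℝ, (R t).IsSymmetric)
    (c d : ℝ) (hcd : c < d) (hconj : AreConjugate R c d) :
    ∀ c' : ℝ, c' ≤ c → ∃ d' ∈ Set.Icc c d, c' < d' ∧ AreConjugate R c' d' := by
  intro c' hc'
  rcases hc'.eq_or_lt with rfl | hc'c
  · exact ⟨d, right_mem_Icc.mpr hcd.le, hcd, hconj⟩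
  by_contra! hnone
  have hR : Continuous fun t => (R t).toContinuousLinearMap :=
    continuous_clm_apply.mpr fun x => hRcont.comp (continuous_id.prodMk continuous_const)
  obtain ⟨B, C, hBC, hB₀, hC₀⟩ := exists_isJacobiTensor hR c'
  obtain ⟨J, hJ, hJ0, hJc, hJd⟩ := hconj
  exact hJ0 <| hBC.eq_zero_of_isUnit hR hRsym hB₀ hcd
    (fun t ht => hBC.isUnit_of_not_areConjugate hR hB₀ hC₀ (hnone t ht (hc'c.trans_le ht.1)))
    hJ hJc hJd
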